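/- arXiv:1408.4227 — 2 statements merged into one kernel-verified Lean document; each statement's English description precedes it below -/
import Mathlib

section
/- Let T be the triangle in the plane with vertices A1=(0,0), A2=(1,0), A3=(0,1). Fix cut points D=(x0,0) and E=(0,y0) with 0<x0<1 and 0<y0<1, let T− be the subtriangle with vertices A1, D, E and T+ = T\T−, and let n be a unit normal vector to the segment DE. Fix Lamé constants μ+, μ− > 0 and λ+, λ− > 0. Then for every prescribed vector (g1,...,g6) ∈ ℝ^6 there exists a unique pair (φ+, φ−) of affine maps from ℝ^2 to ℝ^2 such that: (i) φ+(D)=φ−(D) and φ+(E)=φ−(E); (ii) σ+(φ+)·n = σ−(φ−)·n (the Laplace–Young jump condition across DE); (iii) the averages over the edge e1 from A2 to A3 of the first and second components of φ+ equal g1 and g4, the averages over the edge e2 from A1 to A3 of the piecewise function (equal to φ− on the part from A1 to E and to φ+ on the part from E to A3) have first and second components g2 and g5, and the averages over the edge e3 from A1 to A2 of the piecewise function (equal to φ− from A1 to D and to φ+ from D to A2) have first and second components g3 and g6. -/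
/-!
The twelve conditions are linear in the twelve coefficients of `(φ⁺, φ⁻)`, so it suffices to
show that the homogeneous problem has only the trivial solution. Continuity at `D` and `E`
forces `φ⁻ - φ⁺ = c (n · (x - D))` for some `c ∈ ℝ²`, since `n` spans the orthogonal complement
of `DE`. Vanishing edge averages then give `∇φ⁺ = -κ c nᵀ` and `∇φ⁻ = (1 - κ) c nᵀ` with
`κ = x0 y0 ∈ (0, 1)`, and the traction condition becomes
`(κ μ⁺ + (1 - κ) μ⁻) c + (κ (μ⁺ + λ⁺) + (1 - κ) (μ⁻ + λ⁻)) (c · n) n = 0`.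
Dotting with `n` gives `c · n = 0`, hence `c = 0`.
-/

open Matrix

theorem eq_zero_of_smul_add_dotProduct_smul_eq_zero {m : Type*} [Fintype m] {c n : m → ℝ}
    {A B : ℝ} (hn : n ⬝ᵥ n = 1) (hA : 0 < A) (hAB : 0 < A + B)
    (h : A • c + (B * (c ⬝ᵥ n)) • n = 0) : c = 0 := by
  have hcn : c ⬝ᵥ n = 0 := by
    have h' := congrArg (· ⬝ᵥ n) h
    simp only [add_dotProduct, smul_dotProduct, hn, zero_dotProduct, smul_eq_mul] at h'
    exact (mul_eq_zero.1 (by linear_combination h' : (A + B) * (c ⬝ᵥ n) = 0)).resolve_left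
      hAB.ne'
  rw [hcn, mul_zero, zero_smul, add_zero] at h
  exact (smul_eq_zero.1 h).resolve_left hA.ne'

section Stress

variable {m : Type*} [Fintype m] [DecidableEq m]

def stress (μ l : ℝ) : Matrix m m ℝ →ₗ[ℝ] Matrix m m ℝ where
  toFun B := μ • (B + Bᵀ) + (l * B.trace) • 1
  map_add' B C := by simp only [transpose_add, trace_add]; module
  map_smul' s B := by
    simp only [transpose_smul, trace_smul, RingHom.id_apply, smul_eq_mul]; module

theorem stress_vecMulVec_mulVec (μ l : ℝ) (c n : m → ℝ) :
    stress μ l (vecMulVec c n) *ᵥ n = μ • ((n ⬝ᵥ n) • c + (c ⬝ᵥ n) • n) + (l * (c ⬝ᵥ n)) • n := by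
  simp [stress, add_mulVec, smul_mulVec, vecMulVec_mulVec, trace_vecMulVec, transpose_vecMulVec]

theorem eq_zero_of_stress_smul_vecMulVec_mulVec_eq {κ μp μm lp lm : ℝ} {c n : m → ℝ}
    (hκ0 : 0 < κ) (hκ1 : κ < 1) (hμp : 0 < μp) (hμm : 0 < μm) (hlp : 0 < lp) (hlm : 0 < lm)
    (hn : n ⬝ᵥ n = 1)
    (h : stress μp lp (-κ • vecMulVec c n) *ᵥ n = stress μm lm ((1 - κ) • vecMulVec c n) *ᵥ n) :
    c = 0 := by
  have hκ1' : 0 < 1 - κ := sub_pos.2 hκ1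
  have hA : 0 < κ * μp + (1 - κ) * μm := by positivity
  have hB : 0 < κ * (μp + lp) + (1 - κ) * (μm + lm) := by positivity
  refine eq_zero_of_smul_add_dotProduct_smul_eq_zero hn hA (add_pos hA hB) ?_
  rw [map_smul, map_smul, smul_mulVec, smul_mulVec, stress_vecMulVec_mulVec,
    stress_vecMulVec_mulVec, hn, one_smul] at h
  linear_combination (norm := module) -h

end Stress

theorem eq_vecMulVec_mulVec_of_mulVec_eq_zero {J : Matrix (Fin 2) (Fin 2) ℝ} {n w : Fin 2 → ℝ}
    (hn : n ⬝ᵥ n = 1) (hnw : n ⬝ᵥ w = 0) (hw : w ≠ 0) (hJ : J *ᵥ w = 0) :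
    J = vecMulVec (J *ᵥ n) n := by
  rw [vec2_dotProduct] at hn hnw
  have hdet (i : Fin 2) : J i 0 * n 1 = J i 1 * n 0 := by
    have hJi : J i 0 * w 0 + J i 1 * w 1 = 0 := by
      simpa [mulVec, vec2_dotProduct] using congrFun hJ i
    by_cases hw0 : w 0 = 0
    · have hw1 : w 1 ≠ 0 := fun hw1 => hw (funext fun j => by fin_cases j <;> assumption)
      exact mul_right_cancel₀ hw1 (by linear_combination J i 0 * hnw - n 0 * hJi)
    · exact mul_right_cancel₀ hw0 (by linear_combination n 1 * hJi - J i 1 * hnw)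
  ext i j
  rw [vecMulVec_apply, mulVec, vec2_dotProduct]
  fin_cases j <;> simp only [Fin.zero_eta, Fin.mk_one]
  · linear_combination n 1 * hdet i - J i 0 * hn
  · linear_combination (-n 0) * hdet i - J i 1 * hn

theorem intervalIntegral_mul_add_eq_midpoint (α β c d : ℝ) :
    ∫ t in c..d, (α * t + β) = (d - c) * (α * ((c + d) / 2) + β) := by
  rw [intervalIntegral.integral_add ((continuous_const_mul α).intervalIntegrable c d)
    intervalIntegrable_const, intervalIntegral.integral_const_mul, integral_id,
    intervalIntegral.integral_const, smul_eq_mul]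
  ring

theorem intervalIntegral_mulVec_add_eq_midpoint {m k : Type*} [Fintype k] {γ : ℝ → k → ℝ}
    (p v : k → ℝ) (hγ : ∀ t, γ t = p + t • v) (B : Matrix m k ℝ) (a : m → ℝ) (c d : ℝ) (i : m) :
    ∫ t in c..d, (B *ᵥ γ t + a) i = (d - c) * (B *ᵥ γ ((c + d) / 2) + a) i := by
  have h (t : ℝ) : (B *ᵥ γ t + a) i = (B *ᵥ v) i * t + (B *ᵥ p + a) i := by
    simp only [hγ, mulVec_add, mulVec_smul, Pi.add_apply, Pi.smul_apply, smul_eq_mul]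
    ring
  simp only [h, intervalIntegral_mul_add_eq_midpoint]

def affineEval {R m n : Type*} [CommSemiring R] [Fintype n] (p : n → R) :
    Matrix m n R × (m → R) →ₗ[R] m → R where
  toFun φ := φ.1 *ᵥ p + φ.2
  map_add' φ ψ := by simp only [Prod.fst_add, Prod.snd_add, add_mulVec]; abel
  map_smul' s φ := by
    simp only [Prod.smul_fst, Prod.smul_snd, smul_mulVec, RingHom.id_apply, smul_add]

local notation "Aff₂" => Matrix (Fin 2) (Fin 2) ℝ × (Fin 2 → ℝ)

/-- The edge integrals are written by the midpoint rule, which is exact for affine integrands. -/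
noncomputable def brokenCRDofs (x0 y0 μp μm lp lm : ℝ) (n : Fin 2 → ℝ) :
    Aff₂ × Aff₂ →ₗ[ℝ]
      (Fin 2 → ℝ) × (Fin 2 → ℝ) × (Fin 2 → ℝ) × (Fin 2 → ℝ) × (Fin 2 → ℝ) × (Fin 2 → ℝ) where
  toFun q :=
    (affineEval ![x0, 0] q.1 - affineEval ![x0, 0] q.2,
     affineEval ![0, y0] q.1 - affineEval ![0, y0] q.2,
     stress μp lp q.1.1 *ᵥ n - stress μm lm q.2.1 *ᵥ n,
     affineEval ![1 / 2, 1 / 2] q.1,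
     y0 • affineEval ![0, y0 / 2] q.2 + (1 - y0) • affineEval ![0, (y0 + 1) / 2] q.1,
     x0 • affineEval ![x0 / 2, 0] q.2 + (1 - x0) • affineEval ![(x0 + 1) / 2, 0] q.1)
  map_add' q r := by
    simp only [Prod.fst_add, Prod.snd_add, map_add, add_mulVec, Prod.mk_add_mk, Prod.mk.injEq,
      true_and]
    and_intros <;> module
  map_smul' s q := by
    simp only [Prod.smul_fst, Prod.smul_snd, map_smul, smul_mulVec, Prod.smul_mk,
      RingHom.id_apply, Prod.mk.injEq, true_and]
    and_intros <;> module

section BrokenCR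

variable {x0 y0 μp μm lp lm : ℝ} {n : Fin 2 → ℝ}

theorem brokenCRDofs_injective
    (hx0 : 0 < x0) (hx1 : x0 < 1) (hy0 : 0 < y0) (hy1 : y0 < 1)
    (hμp : 0 < μp) (hμm : 0 < μm) (hlp : 0 < lp) (hlm : 0 < lm)
    (hn : n ⬝ᵥ n = 1) (hperp : n ⬝ᵥ (![0, y0] - ![x0, 0]) = 0) :
    Function.Injective (brokenCRDofs x0 y0 μp μm lp lm n) := by
  refine (injective_iff_map_eq_zero _).2 ?_
  rintro ⟨⟨Bp, ap⟩, ⟨Bm, am⟩⟩ hq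
  simp only [brokenCRDofs, affineEval, LinearMap.coe_mk, AddHom.coe_mk, Prod.mk_eq_zero,
    sub_eq_zero] at hq
  obtain ⟨hD, hE, hσ, h1, h2, h3⟩ := hq
  set c := (Bm - Bp) *ᵥ n
  have hBm : Bm = Bp + vecMulVec c n := by
    rw [← sub_eq_iff_eq_add']
    refine eq_vecMulVec_mulVec_of_mulVec_eq_zero hn hperp ?_ ?_
    · exact fun h => hy0.ne' (by simpa using congrFun h 1)
    · rw [sub_mulVec, mulVec_sub, mulVec_sub]
      linear_combination (norm := module) hD - hE
  clear_value c
  subst hBm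
  have ham : am = ap - (n 0 * x0) • c := by
    rw [add_mulVec, vecMulVec_mulVec, op_smul_eq_smul, vec2_dotProduct] at hD
    simp only [cons_val_zero, cons_val_one, mul_zero, add_zero] at hD
    linear_combination (norm := module) -hD
  subst ham
  have hBp : Bp = -(x0 * y0) • vecMulVec c n := by
    ext i j
    have h1i := congrFun h1 i
    have h2i := congrFun h2 i
    have h3i := congrFun h3 i
    simp only [mulVec, vec2_dotProduct, vecMulVec_apply, Matrix.add_apply, Matrix.smul_apply,
      Pi.add_apply, Pi.sub_apply, Pi.smul_apply, Pi.zero_apply, smul_eq_mul, cons_val_zero,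
      cons_val_one] at hperp h1i h2i h3i ⊢
    fin_cases j <;> simp only [Fin.zero_eta, Fin.mk_one]
    · linear_combination 2 * h1i - 2 * h2i + c i * y0 * hperp
    · linear_combination 2 * h1i - 2 * h3i + c i * x0 * hperp
  have hc : c = 0 := by
    have hBm : Bp + vecMulVec c n = (1 - x0 * y0) • vecMulVec c n := by rw [hBp]; module
    rw [hBm, hBp] at hσ
    exact eq_zero_of_stress_smul_vecMulVec_mulVec_eq (mul_pos hx0 hy0) (by nlinarith)
      hμp hμm hlp hlm hn hσ
  subst hc
  have hap : ap = 0 := by simpa [hBp] using h1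
  simp [hBp, hap]

theorem brokenCRDofs_bijective
    (hx0 : 0 < x0) (hx1 : x0 < 1) (hy0 : 0 < y0) (hy1 : y0 < 1)
    (hμp : 0 < μp) (hμm : 0 < μm) (hlp : 0 < lp) (hlm : 0 < lm)
    (hn : n ⬝ᵥ n = 1) (hperp : n ⬝ᵥ (![0, y0] - ![x0, 0]) = 0) :
    Function.Bijective (brokenCRDofs x0 y0 μp μm lp lm n) := by
  have hinj := brokenCRDofs_injective hx0 hx1 hy0 hy1 hμp hμm hlp hlm hn hperp
  refine ⟨hinj, (LinearMap.injective_iff_surjective_of_finrank_eq_finrank ?_).1 hinj⟩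
  simp [Module.finrank_prod, Module.finrank_matrix]

end BrokenCR

/-- **Unisolvence of the broken Crouzeix–Raviart immersed basis (Proposition 3.2).**
On the reference triangle with vertices `A1 = (0,0)`, `A2 = (1,0)`, `A3 = (0,1)`, cut by the
segment from `D = (x0, 0)` to `E = (0, y0)` with unit normal `n`, and for Lamé constants
`μ⁺, μ⁻, λ⁺, λ⁻ > 0`, every choice of the six edge-average values `g` determines a unique pair
of affine maps `φ⁺ p = B⁺ p + a⁺`, `φ⁻ p = B⁻ p + a⁻` (encoded by the pairs
`(B⁺, a⁺)` and `(B⁻, a⁻)`) that are continuous at `D` and `E`, satisfy the Laplace–Young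
stress-jump condition `σ⁺(φ⁺)·n = σ⁻(φ⁻)·n` across `DE`
(where `σˢ(φˢ) = 2 μˢ ε(φˢ) + λˢ tr(ε(φˢ)) I = μˢ (Bˢ + Bˢᵀ) + λˢ (tr Bˢ) I`),
and have the prescribed averages over the three edges (the edges `e2`, `e3` meeting the cut
are split, using `φ⁻` on the part towards `A1` and `φ⁺` on the remaining part). -/
theorem broken_CR_basis_unisolvent
    (x0 y0 : ℝ) (hx0 : 0 < x0) (hx1 : x0 < 1) (hy0 : 0 < y0) (hy1 : y0 < 1)
    (μp μm lp lm : ℝ) (hμp : 0 < μp) (hμm : 0 < μm) (hlp : 0 < lp) (hlm : 0 < lm)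
    (n : Fin 2 → ℝ) (hunit : (n 0) ^ 2 + (n 1) ^ 2 = 1)
    (hperp : n 0 * (0 - x0) + n 1 * (y0 - 0) = 0)
    (g : Fin 6 → ℝ) :
    ∃! q : (Matrix (Fin 2) (Fin 2) ℝ × (Fin 2 → ℝ)) × (Matrix (Fin 2) (Fin 2) ℝ × (Fin 2 → ℝ)),
      let φp : (Fin 2 → ℝ) → (Fin 2 → ℝ) := fun p => q.1.1.mulVec p + q.1.2
      let φm : (Fin 2 → ℝ) → (Fin 2 → ℝ) := fun p => q.2.1.mulVec p + q.2.2
      let σp : Matrix (Fin 2) (Fin 2) ℝ :=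
        μp • (q.1.1 + q.1.1ᵀ) + (lp * q.1.1.trace) • (1 : Matrix (Fin 2) (Fin 2) ℝ)
      let σm : Matrix (Fin 2) (Fin 2) ℝ :=
        μm • (q.2.1 + q.2.1ᵀ) + (lm * q.2.1.trace) • (1 : Matrix (Fin 2) (Fin 2) ℝ)
      -- continuity at the cut points D = (x0, 0) and E = (0, y0)
      φp ![x0, 0] = φm ![x0, 0] ∧
      φp ![0, y0] = φm ![0, y0] ∧
      -- Laplace–Young condition across DE
      σp.mulVec n = σm.mulVec n ∧
      -- averages over edge e1 from A2 = (1,0) to A3 = (0,1)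
      (∫ t in (0:ℝ)..1, φp ![1 - t, t] 0) = g 0 ∧
      (∫ t in (0:ℝ)..1, φp ![1 - t, t] 1) = g 3 ∧
      -- averages over edge e2 from A1 = (0,0) to A3 = (0,1), split at E
      ((∫ t in (0:ℝ)..y0, φm ![0, t] 0) + ∫ t in y0..1, φp ![0, t] 0) = g 1 ∧
      ((∫ t in (0:ℝ)..y0, φm ![0, t] 1) + ∫ t in y0..1, φp ![0, t] 1) = g 4 ∧
      -- averages over edge e3 from A1 = (0,0) to A2 = (1,0), split at D
      ((∫ t in (0:ℝ)..x0, φm ![t, 0] 0) + ∫ t in x0..1, φp ![t, 0] 0) = g 2 ∧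
      ((∫ t in (0:ℝ)..x0, φm ![t, 0] 1) + ∫ t in x0..1, φp ![t, 0] 1) = g 5 := by
  have hn : n ⬝ᵥ n = 1 := by rw [vec2_dotProduct]; linear_combination hunit
  have hDE : n ⬝ᵥ (![0, y0] - ![x0, 0]) = 0 := by
    simpa only [vec2_dotProduct, Pi.sub_apply, cons_val_zero, cons_val_one] using hperp
  have he1 := intervalIntegral_mulVec_add_eq_midpoint (m := Fin 2) (γ := fun t => ![1 - t, t])
    ![1, 0] ![-1, 1] (fun t => by ext j; fin_cases j <;> simp [sub_eq_add_neg])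
  have he2 := intervalIntegral_mulVec_add_eq_midpoint (m := Fin 2) (γ := fun t => ![0, t])
    0 ![0, 1] (fun t => by ext j; fin_cases j <;> simp)
  have he3 := intervalIntegral_mulVec_add_eq_midpoint (m := Fin 2) (γ := fun t => ![t, 0])
    0 ![1, 0] (fun t => by ext j; fin_cases j <;> simp)
  refine (existsUnique_congr fun q => ?_).2 ((brokenCRDofs_bijective hx0 hx1 hy0 hy1 hμp hμm
    hlp hlm hn hDE).existsUnique (0, 0, 0, ![g 0, g 3], ![g 1, g 4], ![g 2, g 5]))
  simp only [he1, he2, he3]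
  simp only [brokenCRDofs, affineEval, stress, LinearMap.coe_mk, AddHom.coe_mk,
    Prod.mk.injEq, sub_eq_zero, funext_iff, Fin.forall_fin_two, Pi.add_apply, Pi.smul_apply,
    smul_eq_mul, cons_val_zero, cons_val_one]
  norm_num [and_assoc]
end

section
/- Fix real numbers x, y with 0<x<1 and 0<y<1, Lamé constants μ+, μ− > 0 and λ+, λ− > 0, and set n1 = y/√(x²+y²), n2 = x/√(x²+y²). Let A be the 5×6 real matrix with rows (1, 1/2, 1/2, 0, 0, 0), (1−y, 0, (1−y²)/2, y, 0, y²/2), (1−x, (1−x²)/2, 0, x, x²/2, 0), (−1, −x, 0, 1, x, 0), (−1, 0, −y, 1, 0, y). Let d1 = (0, (2μ+ + λ+)n1, μ+ n2, 0, −(2μ− + λ−)n1, −μ− n2), d2 = (0, μ+ n2, λ+ n1, 0, −μ− n2, −λ− n1), e1 = (0, λ+ n2, μ+ n1, 0, −λ− n2, −μ− n1), e2 = (0, μ+ n1, (2μ+ + λ+)n2, 0, −μ− n1, −(2μ− + λ−)n2). Let M be the 12×12 real matrix whose rows 1–5 are the rows of A followed by six zeros, whose row 6 is d1 followed by d2,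 whose rows 7–11 are six zeros followed by the rows of A, and whose row 12 is e1 followed by e2. Then det M ≠ 0. -/
/-!
Each diagonal copy of `A` has a one-dimensional kernel, spanned by the coefficients `w` of the
continuous broken affine function with vanishing edge averages whose gradients on the two sides,
`2xy (y, x)` and `2(xy - 1) (y, x)`, are both normal to `DE`. A null vector of `M` is therefore
`(s w, t w)`, and the two stress rows reduce to a `2 × 2` system in `(s, t)` with determinant
`4 P (2P + Q) ((x² + y²) / r)²`, where `r = √(x² + y²)`; here `P = xy μ⁺ + (1 - xy) μ⁻` and
`Q = xy λ⁺ + (1 - xy) λ⁻` are positive because `0 < xy < 1`.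
-/

open Matrix

section CoupledSystem

variable {K : Type*} [Field K] {m : ℕ}

/-- The block matrix with rows `(A | 0)`, `(d₁ | d₂)`, `(0 | A)`, `(e₁ | e₂)`. -/
def coupledSystem (A : Matrix (Fin m) (Fin (m + 1)) K) (d₁ d₂ e₁ e₂ : Fin (m + 1) → K) :
    Matrix (Fin (m + 1) ⊕ Fin (m + 1)) (Fin (m + 1) ⊕ Fin (m + 1)) K :=
  fromBlocks (of (Fin.snoc (of.symm A) d₁)) (of (Fin.snoc 0 d₂))
    (of (Fin.snoc 0 e₁)) (of (Fin.snoc (of.symm A) e₂))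

theorem det_coupledSystem_ne_zero (A : Matrix (Fin m) (Fin (m + 1)) K) (w : Fin (m + 1) → K)
    (hker : ∀ v, A *ᵥ v = 0 → ∃ t : K, v = t • w) (d₁ d₂ e₁ e₂ : Fin (m + 1) → K)
    (hcoupling : (d₁ ⬝ᵥ w) * (e₂ ⬝ᵥ w) - (d₂ ⬝ᵥ w) * (e₁ ⬝ᵥ w) ≠ 0) :
    (coupledSystem A d₁ d₂ e₁ e₂).det ≠ 0 := by
  intro hdet
  obtain ⟨v, hv0, hv⟩ := exists_mulVec_eq_zero_iff.mpr hdet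
  have hv₁ i := congrFun hv (Sum.inl i)
  have hv₂ i := congrFun hv (Sum.inr i)
  simp only [coupledSystem, fromBlocks_mulVec, Sum.elim_inl, Sum.elim_inr, Pi.add_apply,
    Pi.zero_apply] at hv₁ hv₂
  obtain ⟨s, hs⟩ := hker (v ∘ Sum.inl) (funext fun i => by
    simpa [mulVec] using hv₁ i.castSucc)
  obtain ⟨t, ht⟩ := hker (v ∘ Sum.inr) (funext fun i => by
    simpa [mulVec] using hv₂ i.castSucc)
  have hd := hv₁ (Fin.last m)
  have he := hv₂ (Fin.last m)
  simp only [mulVec, of_apply, Fin.snoc_last, hs, ht, dotProduct_smul, smul_eq_mul] at hd he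
  have hs0 : s = 0 := by
    refine (mul_eq_zero.mp ?_).resolve_left hcoupling
    linear_combination (e₂ ⬝ᵥ w) * hd - (d₂ ⬝ᵥ w) * he
  have ht0 : t = 0 := by
    refine (mul_eq_zero.mp ?_).resolve_left hcoupling
    linear_combination (d₁ ⬝ᵥ w) * he - (e₁ ⬝ᵥ w) * hd
  refine hv0 (funext fun i => ?_)
  rcases i with i | i
  · simpa [hs0] using congrFun hs i
  · simpa [ht0] using congrFun ht i

end CoupledSystem

noncomputable def crInterfaceMatrix (x y : ℝ) : Matrix (Fin 5) (Fin 6) ℝ :=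
  !![1, 1 / 2, 1 / 2, 0, 0, 0;
     1 - y, 0, (1 - y ^ 2) / 2, y, 0, y ^ 2 / 2;
     1 - x, (1 - x ^ 2) / 2, 0, x, x ^ 2 / 2, 0;
     -1, -x, 0, 1, x, 0;
     -1, 0, -y, 1, 0, y]

def crInterfaceKernel (x y : ℝ) : Fin 6 → ℝ :=
  ![-(x + y) * x * y, 2 * x * y ^ 2, 2 * x ^ 2 * y, (2 - x - y) * x * y,
    2 * (x * y - 1) * y, 2 * (x * y - 1) * x]

theorem exists_eq_smul_crInterfaceKernel {x y : ℝ} (hx : x ≠ 0) (hy : y ≠ 0) (v : Fin 6 → ℝ)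
    (hv : crInterfaceMatrix x y *ᵥ v = 0) : ∃ t : ℝ, v = t • crInterfaceKernel x y := by
  obtain ⟨g₀, g₁, g₂, g₃, g₄⟩ : _ ∧ _ ∧ _ ∧ _ ∧ _ := by
    simpa [funext_iff, Fin.forall_fin_succ, mulVec, dotProduct, Fin.sum_univ_six,
      crInterfaceMatrix] using hv
  have h₂ : y * v 2 = x * v 1 := by
    linear_combination 2 * (y - x) * g₀ + 2 * x * g₁ - 2 * y * g₂ + x * y * g₃ - x * y * g₄
  have h₀ : 2 * y * v 0 = -(x + y) * v 1 := by linear_combination 2 * y * g₀ - h₂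
  have h₄ : x * y * v 4 = (x * y - 1) * v 1 :=
    mul_left_cancel₀ hx (by linear_combination -2 * y * g₂ + 2 * x * y * g₃ + h₀)
  have h₅ : y ^ 2 * v 5 = (x * y - 1) * v 1 :=
    mul_left_cancel₀ hy
      (by linear_combination -2 * y * g₁ + 2 * y ^ 2 * g₄ + h₀ + (1 + y ^ 2) * h₂)
  have h₃ : 2 * y * v 3 = (2 - x - y) * v 1 := by linear_combination 2 * y * g₃ + h₀ - 2 * h₄
  refine ⟨v 1 / (2 * x * y ^ 2), funext fun i => ?_⟩
  fin_cases i <;>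
    simp only [crInterfaceKernel, Pi.smul_apply, smul_eq_mul, Fin.zero_eta, Fin.mk_one,
      Fin.reduceFinMk, Fin.isValue, cons_val_zero, cons_val_one, cons_val] <;>
    field_simp <;> linarith

theorem crInterfaceKernel_stress_det {x y μp μm lp lm r n1 n2 : ℝ} (hr : r ≠ 0)
    (hn1 : n1 = y / r) (hn2 : n2 = x / r) {d1 d2 e1 e2 : Fin 6 → ℝ}
    (hd1 : d1 = ![0, (2 * μp + lp) * n1, μp * n2, 0, -((2 * μm + lm) * n1), -(μm * n2)])
    (hd2 : d2 = ![0, μp * n2, lp * n1, 0, -(μm * n2), -(lm * n1)])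
    (he1 : e1 = ![0, lp * n2, μp * n1, 0, -(lm * n2), -(μm * n1)])
    (he2 : e2 = ![0, μp * n1, (2 * μp + lp) * n2, 0, -(μm * n1), -((2 * μm + lm) * n2)]) :
    (d1 ⬝ᵥ crInterfaceKernel x y) * (e2 ⬝ᵥ crInterfaceKernel x y)
      - (d2 ⬝ᵥ crInterfaceKernel x y) * (e1 ⬝ᵥ crInterfaceKernel x y)
      = 4 * (μp * x * y + μm * (1 - x * y)) * (2 * (μp * x * y + μm * (1 - x * y))
          + (lp * x * y + lm * (1 - x * y))) * ((x ^ 2 + y ^ 2) / r) ^ 2 := by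
  subst hn1 hn2 hd1 hd2 he1 he2
  simp only [crInterfaceKernel, cons_dotProduct_cons, dotProduct_of_isEmpty]
  field_simp
  ring

/-- **Nonvanishing of the determinant of the 12×12 system (Proposition 3.2 / Appendix).**
For any interface cut points `(x,0)`, `(0,y)` with `x, y ∈ (0,1)` and any Lamé constants
`μ⁺, μ⁻, λ⁺, λ⁻ > 0`, the 12×12 coefficient matrix `M` of the linear system determining the
broken Crouzeix–Raviart immersed basis functions — built from the 5×6 block `A`
(edge averages and continuity at the cut points) appearing twice on the diagonal, and the
stress-jump rows `(d1, d2)` and `(e1, e2)` with unit normal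
`(n1, n2) = (y, x)/√(x²+y²)` — has nonzero determinant. -/
theorem broken_CR_system_det_ne_zero
    (x y μp μm lp lm n1 n2 : ℝ)
    (hx : 0 < x) (hx1 : x < 1) (hy : 0 < y) (hy1 : y < 1)
    (hμp : 0 < μp) (hμm : 0 < μm) (hlp : 0 < lp) (hlm : 0 < lm)
    (hn1 : n1 = y / Real.sqrt (x ^ 2 + y ^ 2))
    (hn2 : n2 = x / Real.sqrt (x ^ 2 + y ^ 2))
    (A : Fin 5 → Fin 6 → ℝ)
    (hA : A = ![![1, 1/2, 1/2, 0, 0, 0],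
                ![1 - y, 0, (1 - y ^ 2) / 2, y, 0, y ^ 2 / 2],
                ![1 - x, (1 - x ^ 2) / 2, 0, x, x ^ 2 / 2, 0],
                ![-1, -x, 0, 1, x, 0],
                ![-1, 0, -y, 1, 0, y]])
    (d1 d2 e1 e2 : Fin 6 → ℝ)
    (hd1 : d1 = ![0, (2 * μp + lp) * n1, μp * n2, 0, -((2 * μm + lm) * n1), -(μm * n2)])
    (hd2 : d2 = ![0, μp * n2, lp * n1, 0, -(μm * n2), -(lm * n1)])
    (he1 : e1 = ![0, lp * n2, μp * n1, 0, -(lm * n2), -(μm * n1)])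
    (he2 : e2 = ![0, μp * n1, (2 * μp + lp) * n2, 0, -(μm * n1), -((2 * μm + lm) * n2)])
    (M : Matrix (Fin 12) (Fin 12) ℝ)
    (hM : ∀ i j : Fin 12,
      M i j =
        if hi : (i : ℕ) < 5 then
          (if hj : (j : ℕ) < 6 then A ⟨i, hi⟩ ⟨j, hj⟩ else 0)
        else if (i : ℕ) = 5 then
          (if hj : (j : ℕ) < 6 then d1 ⟨j, hj⟩
           else d2 ⟨(j : ℕ) - 6, by have := j.isLt; omega⟩)
        else if hi2 : (i : ℕ) < 11 then
          (if hj : (j : ℕ) < 6 then 0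
           else A ⟨(i : ℕ) - 6, by omega⟩ ⟨(j : ℕ) - 6, by have := j.isLt; omega⟩)
        else
          (if hj : (j : ℕ) < 6 then e1 ⟨j, hj⟩
           else e2 ⟨(j : ℕ) - 6, by have := j.isLt; omega⟩)) :
    M.det ≠ 0 := by
  have hM_blocks :
      M = reindex finSumFinEquiv finSumFinEquiv (coupledSystem (of A) d1 d2 e1 e2) := by
    ext i j
    obtain ⟨p, rfl⟩ := (finSumFinEquiv (m := 6) (n := 6)).surjective i
    obtain ⟨q, rfl⟩ := (finSumFinEquiv (m := 6) (n := 6)).surjective j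
    rw [reindex_apply, submatrix_apply, Equiv.symm_apply_apply, Equiv.symm_apply_apply]
    rcases p with i | i <;> rcases q with j | j <;> induction i using Fin.lastCases <;>
      simp only [finSumFinEquiv_apply_left, finSumFinEquiv_apply_right, coupledSystem,
        fromBlocks_apply₁₁, fromBlocks_apply₁₂, fromBlocks_apply₂₁, fromBlocks_apply₂₂, of_apply,
        Fin.snoc_last, Fin.snoc_castSucc, of_symm_apply, Pi.zero_apply] <;>
      rw [hM] <;> simp [show ∀ i : Fin 5, (i : ℕ) + 6 < 11 by omega]
  have hxy : 0 < 1 - x * y := by nlinarith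
  have hP : 0 < μp * x * y + μm * (1 - x * y) := by positivity
  have hQ : 0 < lp * x * y + lm * (1 - x * y) := by positivity
  have hr : Real.sqrt (x ^ 2 + y ^ 2) ≠ 0 := by positivity
  rw [hM_blocks, det_reindex_self]
  refine det_coupledSystem_ne_zero (of A) (crInterfaceKernel x y) ?_ d1 d2 e1 e2 ?_
  · subst hA
    exact exists_eq_smul_crInterfaceKernel hx.ne' hy.ne'
  · rw [crInterfaceKernel_stress_det hr hn1 hn2 hd1 hd2 he1 he2]
    positivity
end
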